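/- arXiv:2603.23560 — 2 statements merged into one kernel-verified Lean document; each statement's English description precedes it below -/
import Mathlib

section
/- Let 𝒜 ⊆ k^{N×N'} be a linear subspace of matrices. For a subspace U ⊆ k^{N'}, define the discrepancy disc(U) := dim U − dim (Σ_{A ∈ 𝒜} A U). If U₁ and U₂ both maximize disc among all subspaces of k^{N'}, then U₁ ∩ U₂ also maximizes disc. In particular, there exists a unique minimal shrunk subspace. -/
/-- The maximizers of the discrepancy `U ↦ dim U − dim 𝒜U` are closed under intersection;
in particular there is a unique minimal shrunk subspace. -/
theorem stmt5 {k : Type*} [Field k] {N N' : ℕ}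
    (𝒜 : Submodule k (Matrix (Fin N) (Fin N') k))
    (disc : Submodule k (Fin N' → k) → ℤ)
    (hdisc : ∀ U : Submodule k (Fin N' → k),
      disc U = (Module.finrank k U : ℤ) -
        (Module.finrank k ((⨆ A ∈ 𝒜, U.map (Matrix.mulVecLin A) : Submodule k (Fin N → k))) : ℤ))
    (U₁ U₂ : Submodule k (Fin N' → k))
    (h1 : ∀ U, disc U ≤ disc U₁) (h2 : ∀ U, disc U ≤ disc U₂) :
    (∀ U, disc U ≤ disc (U₁ ⊓ U₂)) ∧
      ∃! Umin : Submodule k (Fin N' → k),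
        (∀ U, disc U ≤ disc Umin) ∧
          ∀ U' : Submodule k (Fin N' → k), (∀ U, disc U ≤ disc U') → Umin ≤ U' := by
  set F : Submodule k (Fin N' → k) → Submodule k (Fin N → k) :=
    fun U => ⨆ A ∈ 𝒜, U.map (Matrix.mulVecLin A) with hF
  have hmono : Monotone F := by
    intro a b hab
    exact iSup_mono fun A => iSup_mono fun _ => Submodule.map_mono hab
  have key : ∀ V W : Submodule k (Fin N' → k),
      (∀ U, disc U ≤ disc V) → (∀ U, disc U ≤ disc W) → ∀ U, disc U ≤ disc (V ⊓ W) := by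
    intro V W hV hW U
    have hsup : F (V ⊔ W) = F V ⊔ F W := by
      simp only [hF, Submodule.map_sup, iSup_sup_eq]
    have e1 : Module.finrank k ↥(V ⊔ W) + Module.finrank k ↥(V ⊓ W)
        = Module.finrank k V + Module.finrank k W :=
      Submodule.finrank_sup_add_finrank_inf_eq V W
    have e2 : Module.finrank k ↥(F V ⊔ F W) + Module.finrank k ↥(F V ⊓ F W)
        = Module.finrank k ↥(F V) + Module.finrank k ↥(F W) :=
      Submodule.finrank_sup_add_finrank_inf_eq (F V) (F W)
    have e3 : Module.finrank k ↥(F (V ⊓ W)) ≤ Module.finrank k ↥(F V ⊓ F W) :=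
      Submodule.finrank_mono (le_inf (hmono inf_le_left) (hmono inf_le_right))
    have e4 : disc (V ⊔ W) ≤ disc V := hV _
    have hU : disc U ≤ disc W := hW U
    have d1 := hdisc (V ⊓ W)
    have d2 := hdisc (V ⊔ W)
    have d3 := hdisc V
    have d4 := hdisc W
    rw [show (⨆ A ∈ 𝒜, (V ⊓ W).map (Matrix.mulVecLin A)) = F (V ⊓ W) from rfl] at d1
    rw [show (⨆ A ∈ 𝒜, (V ⊔ W).map (Matrix.mulVecLin A)) = F (V ⊔ W) from rfl, hsup] at d2
    rw [show (⨆ A ∈ 𝒜, V.map (Matrix.mulVecLin A)) = F V from rfl] at d3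
    rw [show (⨆ A ∈ 𝒜, W.map (Matrix.mulVecLin A)) = F W from rfl] at d4
    have e1' : (Module.finrank k ↥(V ⊔ W) : ℤ) + Module.finrank k ↥(V ⊓ W)
        = Module.finrank k V + Module.finrank k W := by exact_mod_cast e1
    have e2' : (Module.finrank k ↥(F V ⊔ F W) : ℤ) + Module.finrank k ↥(F V ⊓ F W)
        = Module.finrank k ↥(F V) + Module.finrank k ↥(F W) := by exact_mod_cast e2
    have e3' : (Module.finrank k ↥(F (V ⊓ W)) : ℤ) ≤ Module.finrank k ↥(F V ⊓ F W) := by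
      exact_mod_cast e3
    linarith
  refine ⟨key U₁ U₂ h1 h2, ?_⟩
  obtain ⟨Umin, hUminS, hminimal⟩ :=
    (wellFounded_lt (α := Submodule k (Fin N' → k))).has_min
      {U' | ∀ U, disc U ≤ disc U'} ⟨U₁, h1⟩
  have hle : ∀ U' : Submodule k (Fin N' → k), (∀ U, disc U ≤ disc U') → Umin ≤ U' := by
    intro U' hU'
    have hmem : ∀ U, disc U ≤ disc (Umin ⊓ U') := key Umin U' hUminS hU'
    have hnotlt := hminimal _ hmem
    have : Umin ⊓ U' = Umin := by
      rcases lt_or_eq_of_le (inf_le_left : Umin ⊓ U' ≤ Umin) with h | h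
      · exact absurd h hnotlt
      · exact h
    exact inf_eq_left.mp this
  refine ⟨Umin, ⟨hUminS, hle⟩, ?_⟩
  rintro V ⟨hVmax, hVmin⟩
  exact le_antisymm (hVmin Umin hUminS) (hle V hVmax)
end

section
/- Let M : A[R] → A[G] be a map of free persistence modules presenting V = coker M, let S ⊂ V be a finite set of elements represented by a graded matrix M_S : A[deg S] → A[G] lifting S through the projection p : A[G] → V, and let [N; K] be a kernel of the concatenated map [M_S M] : A[deg S] ⊕ A[R] → A[G], split into components N : A[R_S] → A[deg S] and K : A[R_S] → A[R]. Then N presents the submodule ⟨S⟩ ⊆ V generated by S, that is, for the induced surjection q : A[deg S] → ⟨S⟩ one has q ∘ N = 0 and every t ∈ A[deg S] with q(t) = 0 lies in the image of N, so that ⟨S⟩ ≅ coker N. -/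
/-- Correctness of the `SubmoduleGeneration` algorithm: if `p : F_G → V` is a presentation
of `V` with `ker p = im M` for `M : F_R → F_G`, `M_S : F_S → F_G` lifts a finite set `S`
of elements of `V`, and `(N, K) : F_{R_S} → F_S × F_R` is a kernel of
`[M_S M] : F_S ⊕ F_R → F_G`, then `F_{R_S} →^N F_S →^q ⟨S⟩ → 0` is exact, where
`q = p ∘ M_S` corestricted to the submodule `⟨S⟩ = im (p ∘ M_S)`:
`q ∘ N = 0` and every `t` with `q(t) = 0` lies in the image of `N`. -/
theorem stmt18 {A : Type*} [CommRing A]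
    (FS FR FG FRS V : Type*)
    [AddCommGroup FS] [Module A FS] [AddCommGroup FR] [Module A FR]
    [AddCommGroup FG] [Module A FG] [AddCommGroup FRS] [Module A FRS]
    [AddCommGroup V] [Module A V]
    (M : FR →ₗ[A] FG) (MS : FS →ₗ[A] FG) (p : FG →ₗ[A] V)
    (hp : Function.Surjective p) (hpker : LinearMap.ker p = LinearMap.range M)
    (N : FRS →ₗ[A] FS) (K : FRS →ₗ[A] FR)
    (hker : LinearMap.range (N.prod K) = LinearMap.ker (MS.coprod M)) :
    (∀ v : FRS, p (MS (N v)) = 0) ∧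
      ∀ t : FS, p (MS t) = 0 → t ∈ LinearMap.range N := by
  constructor
  · intro v
    have h : MS (N v) + M (K v) = 0 := by
      have : (N v, K v) ∈ LinearMap.ker (MS.coprod M) := by
        rw [← hker]; exact ⟨v, rfl⟩
      simpa [LinearMap.coprod_apply] using this
    have h2 : MS (N v) = -(M (K v)) := by
      rw [eq_neg_iff_add_eq_zero]; exact h
    have : M (K v) ∈ LinearMap.ker p := by
      rw [hpker]; exact ⟨K v, rfl⟩
    rw [h2, map_neg, LinearMap.mem_ker.mp this, neg_zero]
  · intro t ht
    have : MS t ∈ LinearMap.range M := by rw [← hpker]; exact ht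
    obtain ⟨u, hu⟩ := this
    have : (t, -u) ∈ LinearMap.ker (MS.coprod M) := by
      simp [LinearMap.coprod_apply, ← hu]
    rw [← hker] at this
    obtain ⟨v, hv⟩ := this
    exact ⟨v, congrArg Prod.fst hv⟩
end
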